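/- If G acts 2-transitively on G/H and W is a direct sum of H-isotypic subspaces for ρ↓_H with stabilizer containing H, then the stabilizer of W in G is exactly H (H is maximal in G since the action is 2-transitive, and the stabilizer is a proper subgroup containing H whenever W is not G-invariant); consequently the orbit of W has cardinality |G|/|H|. -/

import Mathlib

open scoped Matrix

/-- Orthogonal projection onto a subspace, as an endomorphism. -/
noncomputable def proj {n : ℕ} (W : Submodule ℂ (EuclideanSpace ℂ (Fin n))) :
    EuclideanSpace ℂ (Fin n) →ₗ[ℂ] EuclideanSpace ℂ (Fin n) :=
  W.subtype ∘ₗ (W.orthogonalProjection).toLinearMap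

/-- Squared chordal distance between two subspaces:
`Trace(Π_P) - Trace(Π_P Π_Q)`. -/
noncomputable def dc2 {n : ℕ} (P Q : Submodule ℂ (EuclideanSpace ℂ (Fin n))) : ℝ :=
  (LinearMap.trace ℂ _ (proj P) - LinearMap.trace ℂ _ (proj P ∘ₗ proj Q)).re

/-- The action of a group element on `ℂⁿ` through a unitary representation. -/
noncomputable def act {n : ℕ} {G : Type*} [Group G]
    (ρ : G →* Matrix.unitaryGroup (Fin n) ℂ) (g : G) :
    EuclideanSpace ℂ (Fin n) →ₗ[ℂ] EuclideanSpace ℂ (Fin n) :=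
  Matrix.toEuclideanLin (ρ g : Matrix (Fin n) (Fin n) ℂ)

/-- Irreducibility of a unitary matrix representation. -/
def IsIrred {n : ℕ} {G : Type*} [Group G] (ρ : G →* Matrix.unitaryGroup (Fin n) ℂ) : Prop :=
  ∀ U : Submodule ℂ (EuclideanSpace ℂ (Fin n)), (∀ g : G, U.map (act ρ g) ≤ U) → U = ⊥ ∨ U = ⊤

/-- The character of a unitary matrix representation. -/
noncomputable def charOf {n : ℕ} {G : Type*} [Group G]
    (ρ : G →* Matrix.unitaryGroup (Fin n) ℂ) (g : G) : ℂ :=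
  (ρ g : Matrix (Fin n) (Fin n) ℂ).trace

/-- `χ` is the character of some irreducible unitary representation of `G`. -/
def IsIrredChar {G : Type*} [Group G] (χ : G → ℂ) : Prop :=
  ∃ (d : ℕ) (σ : G →* Matrix.unitaryGroup (Fin d) ℂ), IsIrred σ ∧ ∀ g, χ g = charOf σ g

/-- Two pairs of subspaces have the same set of principal angles iff they are in the same
orbit of the unitary group. -/
def samePA {n : ℕ} (P Q P' Q' : Submodule ℂ (EuclideanSpace ℂ (Fin n))) : Prop :=
  ∃ U : EuclideanSpace ℂ (Fin n) ≃ₗᵢ[ℂ] EuclideanSpace ℂ (Fin n),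
    P.map U.toLinearEquiv.toLinearMap = P' ∧ Q.map U.toLinearEquiv.toLinearMap = Q'

/-- The isotypic subspace of a unitary representation `ρ` of `H` associated to a character
`χ` : the sum of all `H`-invariant subspaces on which the representation has character `χ`. -/
noncomputable def isotypic {n : ℕ} {H : Type*} [Group H]
    (ρ : H →* Matrix.unitaryGroup (Fin n) ℂ) (χ : H → ℂ) :
    Submodule ℂ (EuclideanSpace ℂ (Fin n)) :=
  sSup {U : Submodule ℂ (EuclideanSpace ℂ (Fin n)) |
    ∃ hU : ∀ (h : H), ∀ x ∈ U, act ρ h x ∈ U,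
      ∀ h : H, LinearMap.trace ℂ U ((act ρ h).restrict (hU h)) = χ h}

/-- Squared chordal distance in terms of projection matrices. -/
noncomputable def dc2M {ι : Type*} [Fintype ι] (P Q : Matrix ι ι ℂ) : ℝ :=
  (P.trace - (P * Q).trace).re

/-! The stabilizer of `W` contains `H`, and it is a proper subgroup because a `G`-invariant `W`
would contradict the irreducibility of `ρ`. A `2`-transitive action is primitive, so the point
stabilizer `H` of `G ⧸ H` is a maximal subgroup; hence the stabilizer of `W` is `H`, and the
orbit-stabilizer theorem counts the orbit of `W`. -/

open MulAction

theorem Subgroup.isCoatom_of_two_transitive {G : Type*} [Group G] {H : Subgroup G}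
    (h2t : ∀ a b c d : G ⧸ H, a ≠ b → c ≠ d → ∃ g : G, g • a = c ∧ g • b = d) (hH : H ≠ ⊤) :
    IsCoatom H := by
  have h2 : IsMultiplyPretransitive G (G ⧸ H) 2 :=
    is_two_pretransitive_iff.mpr fun hab hcd => h2t _ _ _ _ hab hcd
  have := isPreprimitive_of_is_two_pretransitive h2
  have : Nontrivial (G ⧸ H) := QuotientGroup.nontrivial_iff.mpr hH
  simpa using IsPreprimitive.isCoatom_stabilizer_of_isPreprimitive (G := G) ((1 : G) : G ⧸ H)

theorem MulAction.card_orbit_eq_card_div_card_stabilizer {G X : Type*} [Group G] [Fintype G]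
    [MulAction G X] (x : X) :
    Nat.card (orbit G x) = Fintype.card G / Nat.card (stabilizer G x) := by
  rw [← Nat.card_eq_fintype_card, ← Subgroup.card_mul_index (stabilizer G x),
    Nat.mul_div_cancel_left _ Nat.card_pos, index_stabilizer, Nat.card_coe_set_eq]

section UnitaryRep

variable {n : ℕ} {G : Type*} [Group G] (ρ : G →* Matrix.unitaryGroup (Fin n) ℂ)

theorem act_one : act ρ 1 = LinearMap.id := by
  ext x
  simp [act]

theorem act_mul (g h : G) : act ρ (g * h) = act ρ g ∘ₗ act ρ h := by
  ext x
  simp [act, Matrix.mulVec_mulVec]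

noncomputable abbrev submoduleMulAction :
    MulAction G (Submodule ℂ (EuclideanSpace ℂ (Fin n))) where
  smul g W := W.map (act ρ g)
  one_smul W := by
    change W.map (act ρ 1) = W
    rw [act_one, Submodule.map_id]
  mul_smul g h W := by
    change W.map (act ρ (g * h)) = (W.map (act ρ h)).map (act ρ g)
    rw [act_mul, Submodule.map_comp]

end UnitaryRep

theorem stmt9_general {G : Type*} [Group G] [Fintype G] (H : Subgroup G) [Fintype ↥H] {n : ℕ}
    (ρ : G →* Matrix.unitaryGroup (Fin n) ℂ) (hirr : IsIrred ρ)
    (h2t : ∀ a b c d : G ⧸ H, a ≠ b → c ≠ d → ∃ g : G, g • a = c ∧ g • b = d)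
    (W : Submodule ℂ (EuclideanSpace ℂ (Fin n)))
    (hH : ∀ h ∈ H, W.map (act ρ h) = W)
    (hW0 : 0 < Module.finrank ℂ W) (hWn : Module.finrank ℂ W < n) :
    (∀ g : G, W.map (act ρ g) = W ↔ g ∈ H) ∧
      Nat.card {V : Submodule ℂ (EuclideanSpace ℂ (Fin n)) | ∃ g : G, V = W.map (act ρ g)} =
        Fintype.card G / Fintype.card ↥H := by
  let := submoduleMulAction ρ
  have hW_ne_bot : W ≠ ⊥ := Submodule.one_le_finrank_iff.mp hW0
  have hW_ne_top : W ≠ ⊤ := by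
    rintro rfl
    simp at hWn
  have hle : H ≤ stabilizer G W := hH
  have hne_top : stabilizer G W ≠ ⊤ := fun htop =>
    have hinv (g : G) : W.map (act ρ g) ≤ W := (htop ▸ Subgroup.mem_top g : g ∈ stabilizer G W).le
    (hirr W hinv).elim hW_ne_bot hW_ne_top
  have hstab : stabilizer G W = H :=
    ((Subgroup.isCoatom_of_two_transitive h2t (ne_top_of_le_ne_top hne_top hle)).le_iff_eq
      hne_top).mp hle
  have horbit : {V | ∃ g : G, V = W.map (act ρ g)} = orbit G W :=
    Set.ext fun V => exists_congr fun g => eq_comm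
  refine ⟨fun g => by rw [← hstab]; rfl, ?_⟩
  rw [horbit, card_orbit_eq_card_div_card_stabilizer, hstab, Nat.card_eq_fintype_card]

/-- under the hypotheses of the main construction, the stabilizer of `W` in
`G` is exactly `H`, and consequently the orbit of `W` has cardinality `|G|/|H|`. -/
theorem stmt9 {G : Type*} [Group G] [Fintype G] (H : Subgroup G) [Fintype ↥H] {n s : ℕ}
    (ρ : G →* Matrix.unitaryGroup (Fin n) ℂ) (hirr : IsIrred ρ)
    (h2t : ∀ a b c d : G ⧸ H, a ≠ b → c ≠ d → ∃ g : G, g • a = c ∧ g • b = d)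
    (hred : ∃ U : Submodule ℂ (EuclideanSpace ℂ (Fin n)),
      (∀ h : ↥H, U.map (act (ρ.comp H.subtype) h) ≤ U) ∧ U ≠ ⊥ ∧ U ≠ ⊤)
    (χ : Fin s → ↥H → ℂ) (hχ : ∀ i, IsIrredChar (χ i))
    (hdist : ∀ i j, i ≠ j → χ i ≠ χ j)
    (W : Submodule ℂ (EuclideanSpace ℂ (Fin n)))
    (hW : W = ⨆ i : Fin s, isotypic (ρ.comp H.subtype) (χ i))
    (hH : ∀ h ∈ H, W.map (act ρ h) = W)
    (hW0 : 0 < Module.finrank ℂ W) (hWn : Module.finrank ℂ W < n) :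
    (∀ g : G, W.map (act ρ g) = W ↔ g ∈ H) ∧
      Nat.card {V : Submodule ℂ (EuclideanSpace ℂ (Fin n)) | ∃ g : G, V = W.map (act ρ g)} =
        Fintype.card G / Fintype.card ↥H :=
  stmt9_general H ρ hirr h2t W hH hW0 hWn
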